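/- arXiv:2605.08624 — 2 statements merged into one kernel-verified Lean document; each statement's English description precedes it below -/
import Mathlib

section
/- For every integer k ≤ 1, the natural density of the set {n ∈ ℕ : s(n+1) − s(n) = k} exists and equals (1/2)^{2−k}, i.e. lim_{N→∞} (1/N)·|{n < N : s(n+1) − s(n) = k}| = (1/2)^{2−k}. -/
/-! By Legendre's formula `ν₂(n!) = n - s(n)`, so comparing `n!` with `(n+1)!` gives
`s(n+1) - s(n) = 1 - ν₂(n+1)`. Hence for `k = 1 - j` the set in question is
`{n : 2^j ∣ n+1, 2^(j+1) ∤ n+1}`, and since exactly `⌊N/d⌋` of `1, …, N` are multiples of `d`,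
its density is `2^(-j) - 2^(-(j+1)) = 2^(-(j+1))`. -/

/-- `s n` is the number of ones in the binary expansion of `n`,
i.e. the sum of the binary digits of `n`. -/
def s (n : ℕ) : ℕ := (Nat.digits 2 n).sum

open Filter Topology Finset

theorem tendsto_natCast_div_div_atTop (d : ℕ) :
    Tendsto (fun N : ℕ => ((N / d : ℕ) : ℝ) / N) atTop (𝓝 (1 / d)) := by
  rcases d.eq_zero_or_pos with rfl | hd
  · simp
  have hlin : Tendsto (fun N : ℕ => (N : ℝ) / d) atTop atTop :=
    tendsto_natCast_atTop_atTop.atTop_div_const (by positivity)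
  have := (tendsto_nat_floor_div_atTop.comp hlin).mul_const (1 / (d : ℝ))
  rw [one_mul] at this
  refine this.congr' ?_
  filter_upwards [eventually_ne_atTop 0] with N hN
  simp only [Function.comp_apply, Nat.floor_div_eq_div]
  field_simp

theorem padicValNat_eq_iff_pow_dvd_and_not_pow_succ_dvd {p a j : ℕ} (hp : p ≠ 1) (ha : a ≠ 0) :
    padicValNat p a = j ↔ p ^ j ∣ a ∧ ¬p ^ (j + 1) ∣ a := by
  rw [padicValNat_dvd_iff_le_of_ne_one hp ha, padicValNat_dvd_iff_le_of_ne_one hp ha]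
  omega

theorem card_filter_padicValNat_succ_eq {p : ℕ} (hp : p ≠ 1) (N j : ℕ) :
    #{n ∈ range N | padicValNat p (n + 1) = j} = N / p ^ j - N / p ^ (j + 1) := by
  simp_rw [padicValNat_eq_iff_pow_dvd_and_not_pow_succ_dvd hp (Nat.succ_ne_zero _),
    filter_and_not]
  rw [card_sdiff_of_subset, Nat.card_multiples, Nat.card_multiples]
  exact monotone_filter_right _ fun _ _ => (pow_dvd_pow p j.le_succ).trans

theorem tendsto_card_filter_padicValNat_succ_eq {p : ℕ} (hp : p ≠ 1) (j : ℕ) :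
    Tendsto (fun N : ℕ => (#{n ∈ range N | padicValNat p (n + 1) = j} : ℝ) / N) atTop
      (𝓝 (1 / p ^ j - 1 / p ^ (j + 1))) := by
  have := (tendsto_natCast_div_div_atTop (p ^ j)).sub
    (tendsto_natCast_div_div_atTop (p ^ (j + 1)))
  push_cast at this
  refine this.congr fun N => ?_
  rw [card_filter_padicValNat_succ_eq hp, Nat.cast_sub, sub_div]
  rcases p.eq_zero_or_pos with rfl | hp₀
  · simp
  · exact Nat.div_le_div_left (Nat.pow_le_pow_right hp₀ j.le_succ) (by positivity)

theorem padicValNat_two_factorial (n : ℕ) : (padicValNat 2 n.factorial : ℤ) = n - s n := by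
  have := sub_one_mul_padicValNat_factorial (p := 2) n
  rw [Nat.add_one_sub_one, one_mul] at this
  rw [this, Nat.cast_sub (Nat.digit_sum_le 2 n)]
  rfl

theorem s_succ (n : ℕ) : (s (n + 1) : ℤ) = s n + 1 - padicValNat 2 (n + 1) := by
  have := padicValNat_two_factorial (n + 1)
  rw [Nat.factorial_succ, padicValNat.mul n.succ_ne_zero n.factorial_ne_zero, Nat.cast_add,
    padicValNat_two_factorial, Nat.cast_succ] at this
  linarith

/-- For every integer `k ≤ 1`, the natural density of `{n : s(n+1) - s(n) = k}`
exists and equals `(1/2)^(2-k)`. -/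
theorem density_s_succ_sub_s (k : ℤ) (hk : k ≤ 1) :
    Filter.Tendsto
      (fun N : ℕ =>
        (((Finset.range N).filter fun n => (s (n + 1) : ℤ) - (s n : ℤ) = k).card : ℝ) / N)
      Filter.atTop (nhds ((1/2 : ℝ) ^ (2 - k))) := by
  obtain ⟨j, rfl⟩ : ∃ j : ℕ, k = 1 - j := ⟨(1 - k).toNat, by omega⟩
  have hfilter (N : ℕ) : {n ∈ range N | (s (n + 1) : ℤ) - s n = 1 - j} =
      {n ∈ range N | padicValNat 2 (n + 1) = j} :=
    filter_congr fun n _ => by rw [s_succ]; omega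
  have hlimit : (1 / 2 : ℝ) ^ (2 - (1 - j : ℤ)) = 1 / 2 ^ j - 1 / 2 ^ (j + 1) := by
    rw [show 2 - (1 - j : ℤ) = (j + 1 : ℕ) by push_cast; ring, zpow_natCast, one_div_pow,
      pow_succ]
    field_simp
    norm_num
  simp_rw [hfilter, hlimit]
  exact_mod_cast tendsto_card_filter_padicValNat_succ_eq (p := 2) (by norm_num) j
end

section
/- Assume that Σ_{d≥0} P_t(d) > 1/2 for every odd integer t whose binary expansion (t_1 t_2 ⋯ t_n)_2 (with leading digit t_1 = 1) has n ≥ 3 digits and second-most-significant digit t_2 = 0. Then Σ_{d≥0} μ_t(d) > 1/2 for every integer t ≥ 1. -/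
/-- The probability mass functions `P t` on ℤ, defined by
`P 1 = δ₀`, `P (2t) = P t`, `P (2t+1) d = ½ P (t+1) (d+1) + ½ P t (d-1)`. -/
noncomputable def P : ℕ → ℤ → ℝ
  | 0, _ => 0
  | 1, d => if d = 0 then 1 else 0
  | (n+2), d =>
      if h : (n + 2) % 2 = 0 then P ((n+2)/2) d
      else (1/2) * P ((n+2)/2 + 1) (d+1) + (1/2) * P ((n+2)/2) (d-1)
  decreasing_by all_goals omega

/-- The geometric measure `μ₁`: `μ₁ k = (1/2)^(2-k)` for `k ≤ 1`, and `0` otherwise. -/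
noncomputable def mu1 (k : ℤ) : ℝ := if k ≤ 1 then (1/2 : ℝ) ^ (2 - k) else 0

/-- `μ t = μ₁ * P t`. -/
noncomputable def mu (t : ℕ) (d : ℤ) : ℝ := ∑' k : ℤ, mu1 k * P t (d - k)

/-!
The recursion defining `P (2^k + t)` mirrors the recursion of `μ t = μ₁ * P t`, as long as one only
looks at `d ≥ t + 1 - k`: the base cases match because `P (2^j) = δ₀` and `μ₁` satisfies
`μ₁ d = ½ μ₁ (d+1) + ½ δ₁ d`, the same recursion as `P (2^j + 1)`, whose truncation to `d ≥ 2 - j`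
is therefore `μ₁`. Hence `∑_{d ≥ 0} μ t d = ∑_{d ≥ 0} P T d` for `T = 2^(t+1) + t`, whose binary
expansion is `1 0 ⋯ (digits of t)`; for odd `t` the hypothesis applies to `T`, and even `t` reduce
to odd ones since `μ (2 t) = μ t`.
-/

lemma P_zero (d : ℤ) : P 0 d = 0 := by rw [P]

lemma P_one (d : ℤ) : P 1 d = if d = 0 then 1 else 0 := by rw [P]

lemma P_two_mul (s : ℕ) (d : ℤ) : P (2 * s) d = P s d := by
  rcases s with _ | s
  · rfl
  · rw [show 2 * (s + 1) = 2 * s + 2 by ring, P, dif_pos (by omega),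
      show (2 * s + 2) / 2 = s + 1 by omega]

lemma P_two_mul_add_one {s : ℕ} (hs : 1 ≤ s) (d : ℤ) :
    P (2 * s + 1) d = 1 / 2 * P (s + 1) (d + 1) + 1 / 2 * P s (d - 1) := by
  obtain ⟨s, rfl⟩ := Nat.exists_eq_add_of_le' hs
  rw [show 2 * (s + 1) + 1 = 2 * s + 1 + 2 by ring, P, dif_neg (by omega),
    show (2 * s + 1 + 2) / 2 = s + 1 by omega]

lemma P_two_pow (j : ℕ) (d : ℤ) : P (2 ^ j) d = P 1 d := by
  induction j with
  | zero => rfl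
  | succ j ih => rw [pow_succ', P_two_mul, ih]

lemma P_eq_zero_of_lt_abs (t : ℕ) {d : ℤ} (hd : (t : ℤ) < |d|) : P t d = 0 := by
  induction t using Nat.strong_induction_on generalizing d with
  | _ t ih =>
    rw [lt_abs] at hd
    obtain ⟨s, rfl | rfl⟩ := Nat.even_or_odd' t
    · rcases s.eq_zero_or_pos with rfl | hs
      · exact P_zero d
      · rw [P_two_mul]
        exact ih s (by omega) (by rw [lt_abs]; push_cast at hd; omega)
    · rcases s.eq_zero_or_pos with rfl | hs
      · rw [P_one, if_neg (by push_cast at hd; omega)]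
      · rw [P_two_mul_add_one hs, ih (s + 1) (by omega) (by rw [lt_abs]; push_cast at hd ⊢; omega),
          ih s (by omega) (by rw [lt_abs]; push_cast at hd; omega)]
        ring

lemma summable_mu1_mul_P (t : ℕ) (d : ℤ) : Summable fun k : ℤ => mu1 k * P t (d - k) := by
  refine summable_of_ne_finset_zero (s := Finset.Icc (d - t) (d + t)) fun k hk => ?_
  rw [Finset.mem_Icc] at hk
  rw [P_eq_zero_of_lt_abs t (by rw [lt_abs]; omega), mul_zero]

lemma mu1_rec (d : ℤ) : mu1 d = 1 / 2 * mu1 (d + 1) + if d = 1 then 1 / 2 else 0 := by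
  unfold mu1
  rcases lt_trichotomy d 1 with h | rfl | h
  · rw [if_pos h.le, if_pos (by omega), if_neg h.ne, show 2 - d = 1 + (2 - (d + 1)) by ring,
      zpow_add₀ (by norm_num), zpow_one, add_zero]
  · norm_num
  · rw [if_neg (by omega), if_neg (by omega), if_neg h.ne']
    ring

lemma mu_one (d : ℤ) : mu 1 d = mu1 d := by
  rw [mu, tsum_eq_single d fun k hk => by rw [P_one, if_neg (sub_ne_zero.mpr hk.symm), mul_zero],
    sub_self, P_one, if_pos rfl, mul_one]

lemma mu_two_mul (s : ℕ) (d : ℤ) : mu (2 * s) d = mu s d := by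
  simp only [mu, P_two_mul]

lemma mu_two_pow_mul (j s : ℕ) (d : ℤ) : mu (2 ^ j * s) d = mu s d := by
  induction j with
  | zero => rw [pow_zero, one_mul]
  | succ j ih => rw [pow_succ', mul_assoc, mu_two_mul, ih]

lemma mu_two_mul_add_one {s : ℕ} (hs : 1 ≤ s) (d : ℤ) :
    mu (2 * s + 1) d = 1 / 2 * mu (s + 1) (d + 1) + 1 / 2 * mu s (d - 1) := by
  have hsplit : ∀ k : ℤ, mu1 k * P (2 * s + 1) (d - k) =
      1 / 2 * (mu1 k * P (s + 1) (d + 1 - k)) + 1 / 2 * (mu1 k * P s (d - 1 - k)) := fun k => by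
    rw [P_two_mul_add_one hs, show d - k + 1 = d + 1 - k by ring,
      show d - k - 1 = d - 1 - k by ring]
    ring
  rw [mu, tsum_congr hsplit, ((summable_mu1_mul_P _ _).mul_left _).tsum_add
    ((summable_mu1_mul_P _ _).mul_left _), tsum_mul_left, tsum_mul_left, mu, mu]

lemma P_two_pow_add_one (k : ℕ) {d : ℤ} (hd : 2 ≤ d + k) : P (2 ^ k + 1) d = mu1 d := by
  induction k generalizing d with
  | zero =>
    rw [pow_zero, show 1 + 1 = 2 * 1 by rfl, P_two_mul, P_one, mu1, if_neg (by omega),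
      if_neg (by omega)]
  | succ k ih =>
    rw [pow_succ', P_two_mul_add_one Nat.one_le_two_pow, P_two_pow, P_one,
      ih (by push_cast at hd; omega), mu1_rec d]
    by_cases h : d = 1
    · rw [if_pos (by omega), if_pos h]; ring
    · rw [if_neg (by omega), if_neg h]; ring

lemma P_two_pow_add {t k : ℕ} (ht₁ : 1 ≤ t) (ht : t ≤ 2 ^ k) {d : ℤ} (hd : t + 1 ≤ d + k) :
    P (2 ^ k + t) d = mu t d := by
  induction t using Nat.strong_induction_on generalizing k d with
  | _ t ih =>
    obtain ⟨s, rfl | rfl⟩ := Nat.even_or_odd' t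
    · have hs : 1 ≤ s := by omega
      rcases k with _ | k
      · rw [pow_zero] at ht; omega
      rw [pow_succ', ← mul_add, P_two_mul, mu_two_mul]
      exact ih s (by omega) hs (by rw [pow_succ'] at ht; omega) (by push_cast at hd ⊢; omega)
    · rcases s.eq_zero_or_pos with rfl | hs
      · rw [mu_one]; exact P_two_pow_add_one k (by push_cast at hd; omega)
      rcases k with _ | k
      · rw [pow_zero] at ht; omega
      rw [pow_succ'] at ht
      rw [pow_succ', ← add_assoc, ← mul_add, P_two_mul_add_one (by omega), mu_two_mul_add_one hs,
        add_assoc (2 ^ k) s 1,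
        ih (s + 1) (by omega) (by omega) (by omega) (by push_cast at hd ⊢; omega),
        ih s (by omega) hs (by omega) (by push_cast at hd ⊢; omega)]

namespace Nat

theorem length_digits_pow_add {b k t : ℕ} (hb : 2 ≤ b) (ht : t < b ^ k) :
    (b.digits (b ^ k + t)).length = k + 1 := by
  rw [length_digits _ _ hb (by positivity), log_eq_of_pow_le_of_lt_pow (le_add_right _ _) ?_]
  rw [pow_succ]
  nlinarith

theorem getD_digits_pow_succ_add {b k t : ℕ} (hb : 2 ≤ b) (ht : t < b ^ k) :
    (b.digits (b ^ (k + 1) + t)).getD k 0 = 0 := by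
  rw [getD_digits _ _ hb, pow_succ, mul_add_div (by positivity), div_eq_of_lt ht, add_zero,
    mod_self]

end Nat

lemma tsum_mu_eq_tsum_P {t : ℕ} (ht : 1 ≤ t) :
    ∑' d : ℕ, mu t d = ∑' d : ℕ, P (2 ^ (t + 1) + t) d :=
  tsum_congr fun d => (P_two_pow_add ht ((Nat.lt_two_pow_self).le.trans
    (Nat.pow_le_pow_right two_pos (by omega))) (by push_cast; omega)).symm

/-- If `∑_{d ≥ 0} P t d > 1/2` for every odd `t` whose binary expansion
`(t₁ t₂ ⋯ t_n)₂` has `n ≥ 3` digits and second-most-significant digit `t₂ = 0`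
(note `Nat.digits 2 t` is little-endian, so `t₂` sits at index `length - 2`),
then `∑_{d ≥ 0} μ t d > 1/2` for every `t ≥ 1`. -/
theorem cusick_of_second_digit_zero
    (H : ∀ t : ℕ, t % 2 = 1 → 3 ≤ (Nat.digits 2 t).length →
      (Nat.digits 2 t).getD ((Nat.digits 2 t).length - 2) 0 = 0 →
      (1 : ℝ) / 2 < ∑' d : ℕ, P t (d : ℤ)) :
    ∀ t : ℕ, 1 ≤ t → (1 : ℝ) / 2 < ∑' d : ℕ, mu t (d : ℤ) := by
  intro t ht
  obtain ⟨j, s, hs, rfl⟩ := Nat.exists_eq_two_pow_mul_odd (n := t) (by omega)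
  have hs₁ : 1 ≤ s := hs.pos
  simp only [mu_two_pow_mul]
  rw [tsum_mu_eq_tsum_P hs₁]
  have hlen : (Nat.digits 2 (2 ^ (s + 1) + s)).length = s + 2 :=
    Nat.length_digits_pow_add le_rfl (Nat.lt_two_pow_self.trans (Nat.pow_lt_pow_succ one_lt_two))
  apply H
  · exact Nat.odd_iff.mp ((Nat.even_pow.mpr ⟨even_two, by omega⟩).add_odd hs)
  · rw [hlen]; omega
  · rw [hlen, Nat.add_sub_cancel]
    exact Nat.getD_digits_pow_succ_add le_rfl Nat.lt_two_pow_self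
end
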